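/- Let μ > 0. For all real x, y and all real a, b, the following algebraic identity holds: ( a·√((A₁+x+y)(A₂+x−y)) − b·√((A₁−x−y)(A₂−x+y)) + (b−a)·√((A₁−x−y)(A₂+x−y)) + (b−a)·√((A₁+x+y)(A₂−x+y)) )² = a²·( 3A₁A₂ + (x+y)A₂ + (x−y)A₁ − (x²−y²) − 4μ(A₁+A₂+2x) + 8μ² ) + b²·( 3A₁A₂ − (x+y)A₂ − (x−y)A₁ − (x²−y²) − 4μ(A₁+A₂−2x) + 8μ² ) + 2ab·( 4μA₁ + 4μA₂ − 2A₁A₂ + 2(x²−y²) − 12μ² ), where A₁ = A₁(x,y) and A₂ = A₂(x,y). (Note A₁ ≥ |x+y| and A₂ ≥ |x−y|, so all square roots are of nonnegative numbers, and A₁² − (x+y)² = A₂² − (x−y)² = 4μ².) -/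

import Mathlib

noncomputable def A1 (μ x y : ℝ) : ℝ := Real.sqrt ((x + y)^2 + 4*μ^2)
noncomputable def A2 (μ x y : ℝ) : ℝ := Real.sqrt ((x - y)^2 + 4*μ^2)

/-!
Write `A₁ ± (x + y) = p², q²` and `A₂ ± (x - y) = r², s²` with `p, q, r, s ≥ 0`. Every square
root on the left splits as a product of two of `p, q, r, s`, and since
`(A₁ + (x + y))(A₁ - (x + y)) = A₁² - (x + y)² = 4μ²` we get `p q = r s = 2μ`. Expanding the square
then leaves a polynomial identity in `A₁, A₂, x, y, μ`.
-/

theorem sq_combination_eq_of_mul_eq {R : Type*} [CommRing R] {A B u v c p q r s : R} (a b : R)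
    (hp : p ^ 2 = A + u) (hq : q ^ 2 = A - u) (hr : r ^ 2 = B + v) (hs : s ^ 2 = B - v)
    (hpq : p * q = c) (hrs : r * s = c) :
    (a * (p * r) - b * (q * s) + (b - a) * (q * r) + (b - a) * (p * s)) ^ 2
      = a ^ 2 * (3 * A * B + u * B + v * A - u * v - 2 * c * (A + B + u + v) + 2 * c ^ 2)
        + b ^ 2 * (3 * A * B - u * B - v * A - u * v - 2 * c * (A + B - u - v) + 2 * c ^ 2)
        + 2 * a * b * (2 * c * A + 2 * c * B - 2 * A * B + 2 * u * v - 3 * c ^ 2) := by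
  linear_combination
    (a ^ 2 * r ^ 2 + (b - a) ^ 2 * s ^ 2 + 2 * a * (b - a) * (r * s)) * hp
    + (b ^ 2 * s ^ 2 + (b - a) ^ 2 * r ^ 2 - 2 * b * (b - a) * (r * s)) * hq
    + (a ^ 2 * (A + u) + (b - a) ^ 2 * (A - u) + 2 * a * (b - a) * c) * hr
    + (b ^ 2 * (A - u) + (b - a) ^ 2 * (A + u) - 2 * b * (b - a) * c) * hs
    + (-2 * a * b * (r * s) + 2 * a * (b - a) * r ^ 2 - 2 * b * (b - a) * s ^ 2
        + 2 * (b - a) ^ 2 * (r * s)) * hpq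
    + (-2 * a * b * c + 2 * a * (b - a) * (A + u) - 2 * b * (b - a) * (A - u)
        + 2 * (b - a) ^ 2 * c) * hrs

section SqrtSumSquares

variable {A u c : ℝ}

theorem add_nonneg_and_sub_nonneg_of_sq_eq (hA : 0 ≤ A) (hAu : A ^ 2 = u ^ 2 + c ^ 2) :
    0 ≤ A + u ∧ 0 ≤ A - u := by
  obtain ⟨hle, hge⟩ := abs_le_of_sq_le_sq' (hAu ▸ le_add_of_nonneg_right (sq_nonneg c)) hA
  constructor <;> linarith

theorem sqrt_add_mul_sqrt_sub_of_sq_eq (hA : 0 ≤ A) (hc : 0 ≤ c) (hAu : A ^ 2 = u ^ 2 + c ^ 2) :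
    √(A + u) * √(A - u) = c := by
  rw [← Real.sqrt_mul (add_nonneg_and_sub_nonneg_of_sq_eq hA hAu).1,
    show (A + u) * (A - u) = c ^ 2 by linear_combination hAu, Real.sqrt_sq hc]

theorem sq_sqrt_combination_eq {B v : ℝ} (a b : ℝ) (hA : 0 ≤ A) (hB : 0 ≤ B) (hc : 0 ≤ c)
    (hAu : A ^ 2 = u ^ 2 + c ^ 2) (hBv : B ^ 2 = v ^ 2 + c ^ 2) :
    (a * √((A + u) * (B + v)) - b * √((A - u) * (B - v))
        + (b - a) * √((A - u) * (B + v)) + (b - a) * √((A + u) * (B - v))) ^ 2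
      = a ^ 2 * (3 * A * B + u * B + v * A - u * v - 2 * c * (A + B + u + v) + 2 * c ^ 2)
        + b ^ 2 * (3 * A * B - u * B - v * A - u * v - 2 * c * (A + B - u - v) + 2 * c ^ 2)
        + 2 * a * b * (2 * c * A + 2 * c * B - 2 * A * B + 2 * u * v - 3 * c ^ 2) := by
  obtain ⟨hAu_add, hAu_sub⟩ := add_nonneg_and_sub_nonneg_of_sq_eq hA hAu
  obtain ⟨hBv_add, hBv_sub⟩ := add_nonneg_and_sub_nonneg_of_sq_eq hB hBv
  rw [Real.sqrt_mul hAu_add, Real.sqrt_mul hAu_sub, Real.sqrt_mul hAu_sub, Real.sqrt_mul hAu_add]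
  exact sq_combination_eq_of_mul_eq a b (Real.sq_sqrt hAu_add) (Real.sq_sqrt hAu_sub)
    (Real.sq_sqrt hBv_add) (Real.sq_sqrt hBv_sub) (sqrt_add_mul_sqrt_sub_of_sq_eq hA hc hAu)
    (sqrt_add_mul_sqrt_sub_of_sq_eq hB hc hBv)

end SqrtSumSquares

theorem sq_A1 (μ x y : ℝ) : A1 μ x y ^ 2 = (x + y) ^ 2 + (2 * μ) ^ 2 := by
  rw [A1, Real.sq_sqrt (by positivity)]
  ring

theorem sq_A2 (μ x y : ℝ) : A2 μ x y ^ 2 = (x - y) ^ 2 + (2 * μ) ^ 2 := by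
  rw [A2, Real.sq_sqrt (by positivity)]
  ring

theorem stmt11 (μ : ℝ) (hμ : 0 < μ) (x y a b : ℝ) :
    (a * Real.sqrt ((A1 μ x y + x + y) * (A2 μ x y + x - y))
      - b * Real.sqrt ((A1 μ x y - x - y) * (A2 μ x y - x + y))
      + (b - a) * Real.sqrt ((A1 μ x y - x - y) * (A2 μ x y + x - y))
      + (b - a) * Real.sqrt ((A1 μ x y + x + y) * (A2 μ x y - x + y)))^2
    = a^2 * (3 * A1 μ x y * A2 μ x y + (x + y) * A2 μ x y + (x - y) * A1 μ x y
          - (x^2 - y^2) - 4*μ*(A1 μ x y + A2 μ x y + 2*x) + 8*μ^2)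
      + b^2 * (3 * A1 μ x y * A2 μ x y - (x + y) * A2 μ x y - (x - y) * A1 μ x y
          - (x^2 - y^2) - 4*μ*(A1 μ x y + A2 μ x y - 2*x) + 8*μ^2)
      + 2*a*b * (4*μ*A1 μ x y + 4*μ*A2 μ x y - 2*(A1 μ x y)*(A2 μ x y)
          + 2*(x^2 - y^2) - 12*μ^2) := by
  have h := sq_sqrt_combination_eq (A := A1 μ x y) (B := A2 μ x y) a b
    (Real.sqrt_nonneg _) (Real.sqrt_nonneg _)
    (by positivity : 0 ≤ 2 * μ) (sq_A1 μ x y) (sq_A2 μ x y)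
  rw [add_assoc (A1 μ x y) x y, sub_sub (A1 μ x y) x y, add_sub_assoc (A2 μ x y) x y,
    sub_add (A2 μ x y) x y]
  linear_combination h
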